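/- arXiv:1403.1602 — 7 statements merged into one kernel-verified Lean document; each statement's English description precedes it below -/
import Mathlib

section
/- Let κ₁ > 0, κ₂ > 0, γ > 0 and let s satisfy 0 < s < γ/√κ₁. For all m₁ > 0 and all m₂ ∈ (0,1], the function F₁(m₁,m₂) = (κ₂/2 + κ₁(1−√m₂)²/m₁)·s² + γ·m₂ + m₁ satisfies F₁(m₁,m₂) ≥ QF₁(s) = ½(κ₂ − 2κ₁/γ)s² + 2√κ₁·s, and equality holds at m₁ = (κ₁/γ)(γ/√κ₁ − s)s and m₂ = κ₁s²/γ² (which lie in the admissible ranges m₁ > 0, 0 < m₂ < 1). -/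
/-- For `κ₁, κ₂, γ > 0` and `0 < s < γ/√κ₁`, the energy-plus-cost
`F₁(m₁,m₂) = (κ₂/2 + κ₁(1−√m₂)²/m₁)·s² + γ·m₂ + m₁` is bounded below by
`QF₁(s) = ½(κ₂ − 2κ₁/γ)s² + 2√κ₁·s` for all `m₁ > 0`, `m₂ ∈ (0,1]`, with equality at
`m₁ = (κ₁/γ)(γ/√κ₁ − s)s`, `m₂ = κ₁s²/γ²`, which lie in the admissible ranges. -/
theorem stmt_0 (κ₁ κ₂ γ s : ℝ) (hκ₁ : 0 < κ₁) (hκ₂ : 0 < κ₂) (hγ : 0 < γ)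
    (hs : 0 < s) (hs' : s < γ / Real.sqrt κ₁) :
    (∀ m₁ m₂ : ℝ, 0 < m₁ → 0 < m₂ → m₂ ≤ 1 →
        (κ₂ / 2 + κ₁ * (1 - Real.sqrt m₂) ^ 2 / m₁) * s ^ 2 + γ * m₂ + m₁ ≥
          (1 / 2) * (κ₂ - 2 * κ₁ / γ) * s ^ 2 + 2 * Real.sqrt κ₁ * s) ∧
    (0 < (κ₁ / γ) * (γ / Real.sqrt κ₁ - s) * s) ∧
    (0 < κ₁ * s ^ 2 / γ ^ 2 ∧ κ₁ * s ^ 2 / γ ^ 2 < 1) ∧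
    ((κ₂ / 2 + κ₁ * (1 - Real.sqrt (κ₁ * s ^ 2 / γ ^ 2)) ^ 2 /
          ((κ₁ / γ) * (γ / Real.sqrt κ₁ - s) * s)) * s ^ 2
        + γ * (κ₁ * s ^ 2 / γ ^ 2) + (κ₁ / γ) * (γ / Real.sqrt κ₁ - s) * s =
      (1 / 2) * (κ₂ - 2 * κ₁ / γ) * s ^ 2 + 2 * Real.sqrt κ₁ * s) := by
  have ha0 : 0 < Real.sqrt κ₁ := Real.sqrt_pos.mpr hκ₁
  set a := Real.sqrt κ₁ with ha
  have ha2 : a ^ 2 = κ₁ := Real.sq_sqrt hκ₁.le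
  have has : a * s < γ := by
    have := (lt_div_iff₀ ha0).mp hs'
    linarith
  have hsub : 0 < γ / a - s := by
    have : s < γ / a := hs'
    linarith
  refine ⟨?_, ?_, ⟨?_, ?_⟩, ?_⟩
  · intro m₁ m₂ hm₁ hm₂ hm₂'
    have ht0 : 0 < Real.sqrt m₂ := Real.sqrt_pos.mpr hm₂
    set t := Real.sqrt m₂ with htdef
    have ht2 : t ^ 2 = m₂ := Real.sq_sqrt hm₂.le
    have ht1 : t ≤ 1 := Real.sqrt_le_one.mpr hm₂'
    have h1 : κ₁ * (1 - t) ^ 2 / m₁ * s ^ 2 + m₁ ≥ 2 * a * s * (1 - t) := by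
      rw [ge_iff_le, ← sub_nonneg]
      have heq : κ₁ * (1 - t) ^ 2 / m₁ * s ^ 2 + m₁ - 2 * a * s * (1 - t)
          = (a * s * (1 - t) - m₁) ^ 2 / m₁ := by
        rw [← ha2]; field_simp; ring
      rw [heq]; positivity
    have h2 : γ * t ^ 2 - 2 * a * s * t + κ₁ / γ * s ^ 2 ≥ 0 := by
      have heq : γ * t ^ 2 - 2 * a * s * t + κ₁ / γ * s ^ 2 = (γ * t - a * s) ^ 2 / γ := by
        rw [← ha2]; field_simp; ring
      rw [heq]; positivity
    have hexp : (κ₂ / 2 + κ₁ * (1 - t) ^ 2 / m₁) * s ^ 2 + γ * m₂ + m₁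
        = κ₂ / 2 * s ^ 2 + (κ₁ * (1 - t) ^ 2 / m₁ * s ^ 2 + m₁) + γ * t ^ 2 := by
      rw [← ht2]; ring
    rw [hexp]
    have hr : (1 : ℝ) / 2 * (κ₂ - 2 * κ₁ / γ) * s ^ 2 + 2 * a * s
        = κ₂ / 2 * s ^ 2 - κ₁ / γ * s ^ 2 + 2 * a * s := by ring
    rw [hr]
    linarith
  · positivity
  · positivity
  · rw [div_lt_one (by positivity)]
    nlinarith [ha2, has, mul_pos ha0 hs]
  · have hsq : Real.sqrt (κ₁ * s ^ 2 / γ ^ 2) = a * s / γ := by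
      rw [show κ₁ * s ^ 2 / γ ^ 2 = (a * s / γ) ^ 2 by rw [← ha2]; ring]
      exact Real.sqrt_sq (by positivity)
    rw [hsq, ← ha2]
    have hm₁pos : 0 < (a ^ 2 / γ) * (γ / a - s) * s :=
      mul_pos (mul_pos (by positivity) hsub) hs
    have hkey : a ^ 2 * (1 - a * s / γ) ^ 2 / ((a ^ 2 / γ) * (γ / a - s) * s)
        = (a ^ 2 / γ) * (γ / a - s) * s / s ^ 2 := by
      rw [div_eq_div_iff hm₁pos.ne' (by positivity)]
      field_simp
    rw [hkey]
    field_simp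
    ring
end

section
/- Let 0 < κ₁ < κ₂, 0 < γ < 1, and s > 0. Define F₃(m₁) = ½(−κ₁ + (m₁/(2κ₁) + (1−m₁)/(κ₁+κ₂))⁻¹)·s² + m₁ + γ(1−m₁) for m₁ ∈ [0,1], and set m₁⁽³⁾(s) = −2κ₁/(κ₂−κ₁) + s·√(κ₁(κ₁+κ₂)/((1−γ)(κ₂−κ₁))). If ρ₂ ≤ s ≤ ρ₃, where ρ₂ = 2√(κ₁(1−γ)/(κ₂²−κ₁²)) and ρ₃ = √((1−γ)(κ₁+κ₂)/(κ₁(κ₂−κ₁))), then for every m₁ ∈ [0,1] one has F₃(m₁) ≥ QF₃(s) = −½κ₁s² + 2s·√(κ₁(κ₁+κ₂)(1−γ)/(κ₂−κ₁)) + (γ(κ₁+κ₂) − 2κ₁)/(κ₂−κ₁), with equality at m₁ = m₁⁽³⁾(s). -/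
/-!
In the variable `t = 2κ₁ + m₁(κ₂ - κ₁)`, which is positive on `[0, 1]`, the harmonic mean in `F₃`
becomes `2κ₁(κ₁ + κ₂)/t`, so `F₃` is a constant plus `a / t + b t` with
`a = κ₁(κ₁ + κ₂)s²` and `b = (1 - γ)/(κ₂ - κ₁)`. By AM–GM this is at least `2√(ab)`, which gives
`QF₃`, and equality holds where `b t² = a`, i.e. at `m₁ = m₁⁽³⁾(s)`.
-/

open Real

lemma two_sqrt_mul_le_div_add_mul {a b t : ℝ} (ha : 0 ≤ a) (hb : 0 ≤ b) (ht : 0 < t) :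
    2 * √(a * b) ≤ a / t + b * t := by
  have hsq : 0 ≤ (√a - √b * t) ^ 2 := sq_nonneg _
  have hexp : (√a - √b * t) ^ 2 = a + b * t ^ 2 - 2 * √(a * b) * t := by
    rw [sqrt_mul ha]
    linear_combination (sq_sqrt ha) + t ^ 2 * (sq_sqrt hb)
  rw [div_add' _ _ _ ht.ne', le_div_iff₀ ht]
  nlinarith

lemma div_add_mul_eq_two_sqrt_mul {a b t : ℝ} (hb : 0 ≤ b) (ht : 0 < t) (hbt : b * t ^ 2 = a) :
    a / t + b * t = 2 * √(a * b) := by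
  have hsqrt : √(a * b) = b * t := by
    rw [← hbt, show b * t ^ 2 * b = (b * t) ^ 2 by ring]
    exact sqrt_sq (by positivity)
  rw [hsqrt, ← hbt]
  field_simp
  ring

lemma laminate_energy_eq_div_add_mul (κ₁ κ₂ γ s m : ℝ) (hκ₁ : κ₁ ≠ 0) (hsum : κ₁ + κ₂ ≠ 0)
    (hd : κ₂ - κ₁ ≠ 0) (ht : 2 * κ₁ + m * (κ₂ - κ₁) ≠ 0) :
    (1 / 2) * (-κ₁ + (m / (2 * κ₁) + (1 - m) / (κ₁ + κ₂))⁻¹) * s ^ 2 + m + γ * (1 - m)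
      = -(1 / 2) * κ₁ * s ^ 2 + (γ * (κ₁ + κ₂) - 2 * κ₁) / (κ₂ - κ₁)
        + (κ₁ * (κ₁ + κ₂) * s ^ 2 / (2 * κ₁ + m * (κ₂ - κ₁))
          + (1 - γ) / (κ₂ - κ₁) * (2 * κ₁ + m * (κ₂ - κ₁))) := by
  rw [show m / (2 * κ₁) + (1 - m) / (κ₁ + κ₂)
      = (2 * κ₁ + m * (κ₂ - κ₁)) / (2 * κ₁ * (κ₁ + κ₂)) by field_simp; ring, inv_div]
  field_simp
  ring

lemma laminate_optimal_fraction_spec {κ₁ κ₂ γ s m : ℝ} (hκ₁ : 0 < κ₁) (hκ : κ₁ < κ₂)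
    (hγ1 : γ < 1) (hs : 0 < s)
    (hm : m = -(2 * κ₁) / (κ₂ - κ₁) + s * √(κ₁ * (κ₁ + κ₂) / ((1 - γ) * (κ₂ - κ₁)))) :
    0 < 2 * κ₁ + m * (κ₂ - κ₁) ∧
      (1 - γ) / (κ₂ - κ₁) * (2 * κ₁ + m * (κ₂ - κ₁)) ^ 2 = κ₁ * (κ₁ + κ₂) * s ^ 2 := by
  have hd : 0 < κ₂ - κ₁ := sub_pos.mpr hκ
  have hsum : 0 < κ₁ + κ₂ := by linarith
  have hγ : 0 < 1 - γ := sub_pos.mpr hγ1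
  set q := √(κ₁ * (κ₁ + κ₂) / ((1 - γ) * (κ₂ - κ₁)))
  have hq : 0 < q := sqrt_pos.mpr (by positivity)
  have ht : 2 * κ₁ + m * (κ₂ - κ₁) = s * (κ₂ - κ₁) * q := by
    rw [hm]
    field_simp
    ring
  refine ⟨by rw [ht]; positivity, ?_⟩
  rw [ht, mul_pow, sq_sqrt (by positivity)]
  field_simp

theorem stmt_1_general (κ₁ κ₂ γ s : ℝ) (hκ₁ : 0 < κ₁) (hκ : κ₁ < κ₂) (hγ1 : γ < 1)
    (hs : 0 < s) :
    let F₃ : ℝ → ℝ := fun m₁ =>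
      (1 / 2) * (-κ₁ + (m₁ / (2 * κ₁) + (1 - m₁) / (κ₁ + κ₂))⁻¹) * s ^ 2
        + m₁ + γ * (1 - m₁)
    let QF₃ : ℝ :=
      -(1 / 2) * κ₁ * s ^ 2 + 2 * s * Real.sqrt (κ₁ * (κ₁ + κ₂) * (1 - γ) / (κ₂ - κ₁))
        + (γ * (κ₁ + κ₂) - 2 * κ₁) / (κ₂ - κ₁)
    let m₁3 : ℝ :=
      -(2 * κ₁) / (κ₂ - κ₁) + s * Real.sqrt (κ₁ * (κ₁ + κ₂) / ((1 - γ) * (κ₂ - κ₁)))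
    (∀ m₁ : ℝ, 0 ≤ m₁ → m₁ ≤ 1 → F₃ m₁ ≥ QF₃) ∧ F₃ m₁3 = QF₃ := by
  intro F₃ QF₃ m₁3
  have hd : 0 < κ₂ - κ₁ := sub_pos.mpr hκ
  have hsum : 0 < κ₁ + κ₂ := by linarith
  have hγ : 0 < 1 - γ := sub_pos.mpr hγ1
  have hb : 0 ≤ (1 - γ) / (κ₂ - κ₁) := div_nonneg hγ.le hd.le
  have hQ : QF₃ = -(1 / 2) * κ₁ * s ^ 2 + (γ * (κ₁ + κ₂) - 2 * κ₁) / (κ₂ - κ₁)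
      + 2 * √(κ₁ * (κ₁ + κ₂) * s ^ 2 * ((1 - γ) / (κ₂ - κ₁))) := by
    rw [show κ₁ * (κ₁ + κ₂) * s ^ 2 * ((1 - γ) / (κ₂ - κ₁))
        = s ^ 2 * (κ₁ * (κ₁ + κ₂) * (1 - γ) / (κ₂ - κ₁)) by ring, sqrt_mul' _ (by positivity),
      sqrt_sq hs.le]
    ring
  refine ⟨fun m hm0 _ => ?_, ?_⟩
  · have ht : 0 < 2 * κ₁ + m * (κ₂ - κ₁) := by positivity
    rw [show F₃ m = _ from laminate_energy_eq_div_add_mul κ₁ κ₂ γ s m hκ₁.ne' hsum.ne' hd.ne'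
      ht.ne', hQ, ge_iff_le, add_le_add_iff_left]
    exact two_sqrt_mul_le_div_add_mul (by positivity) hb ht
  · obtain ⟨hpos, hbt⟩ := laminate_optimal_fraction_spec hκ₁ hκ hγ1 hs rfl
    rw [show F₃ m₁3 = _ from laminate_energy_eq_div_add_mul κ₁ κ₂ γ s m₁3 hκ₁.ne' hsum.ne'
      hd.ne' hpos.ne', hQ, div_add_mul_eq_two_sqrt_mul hb hpos hbt]

/-- For `0 < κ₁ < κ₂`, `0 < γ < 1`, `s > 0` with `ρ₂ ≤ s ≤ ρ₃`, the
energy-plus-cost `F₃(m₁)` of the laminate L(12,1) is bounded below on `[0,1]` by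
`QF₃(s)`, with equality at `m₁ = m₁⁽³⁾(s)`. -/
theorem stmt_1 (κ₁ κ₂ γ s : ℝ) (hκ₁ : 0 < κ₁) (hκ : κ₁ < κ₂) (hγ0 : 0 < γ) (hγ1 : γ < 1)
    (hs : 0 < s)
    (hρ₂ : 2 * Real.sqrt (κ₁ * (1 - γ) / (κ₂ ^ 2 - κ₁ ^ 2)) ≤ s)
    (hρ₃ : s ≤ Real.sqrt ((1 - γ) * (κ₁ + κ₂) / (κ₁ * (κ₂ - κ₁)))) :
    let F₃ : ℝ → ℝ := fun m₁ =>
      (1 / 2) * (-κ₁ + (m₁ / (2 * κ₁) + (1 - m₁) / (κ₁ + κ₂))⁻¹) * s ^ 2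
        + m₁ + γ * (1 - m₁)
    let QF₃ : ℝ :=
      -(1 / 2) * κ₁ * s ^ 2 + 2 * s * Real.sqrt (κ₁ * (κ₁ + κ₂) * (1 - γ) / (κ₂ - κ₁))
        + (γ * (κ₁ + κ₂) - 2 * κ₁) / (κ₂ - κ₁)
    let m₁3 : ℝ :=
      -(2 * κ₁) / (κ₂ - κ₁) + s * Real.sqrt (κ₁ * (κ₁ + κ₂) / ((1 - γ) * (κ₂ - κ₁)))
    (∀ m₁ : ℝ, 0 ≤ m₁ → m₁ ≤ 1 → F₃ m₁ ≥ QF₃) ∧ F₃ m₁3 = QF₃ :=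
  stmt_1_general κ₁ κ₂ γ s hκ₁ hκ hγ1 hs
end

section
/- Let 0 < κ₁ < κ₂ and 0 < γ < 1, and set ρ₂ = 2√(κ₁(1−γ)/(κ₂²−κ₁²)). Then QF₂(ρ₂) = QF₃(ρ₂) and QF₂′(ρ₂) = QF₃′(ρ₂), where QF₂(s) = ½κ₂s² + γ and QF₃(s) = −½κ₁s² + 2s·√(κ₁(κ₁+κ₂)(1−γ)/(κ₂−κ₁)) + (γ(κ₁+κ₂) − 2κ₁)/(κ₂−κ₁). -/
/-!
With `a = √(κ₁(1−γ)/(κ₂²−κ₁²))` we have `ρ₂ = 2a`, and the square root in `QF₃` is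
`(κ₁+κ₂)a`. Both branches are quadratics in `s`, so matching values and slopes at `2a`
reduces to polynomial identities in `a`, which follow from `a²(κ₂²−κ₁²) = κ₁(1−γ)`.
-/

theorem sqrt_mul_add_mul_div_sub (a b κ₁ κ₂ : ℝ) (h : 0 ≤ κ₁ + κ₂) :
    √(a * (κ₁ + κ₂) * b / (κ₂ - κ₁)) = (κ₁ + κ₂) * √(a * b / (κ₂ ^ 2 - κ₁ ^ 2)) := by
  rcases h.eq_or_lt with h | h
  · simp [← h]
  have : a * (κ₁ + κ₂) * b / (κ₂ - κ₁) = (κ₁ + κ₂) ^ 2 * (a * b / (κ₂ ^ 2 - κ₁ ^ 2)) := by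
    rw [sq_sub_sq, add_comm κ₂, ← mul_div_mul_left (a * (κ₁ + κ₂) * b) _ h.ne', mul_div_assoc']
    ring
  rw [this, Real.sqrt_mul (sq_nonneg _), Real.sqrt_sq h.le]

theorem hasDerivAt_quadratic (a b c x : ℝ) :
    HasDerivAt (fun s => a * s ^ 2 + b * s + c) (2 * a * x + b) x := by
  refine ((((hasDerivAt_pow 2 x).const_mul a).fun_add
    ((hasDerivAt_id' x).const_mul b)).add_const c).congr_deriv ?_
  norm_num
  ring

theorem stmt_4_general (κ₁ κ₂ γ : ℝ) (hκ₁ : 0 < κ₁) (hκ : κ₁ < κ₂) (hγ1 : γ < 1) :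
    let ρ₂ : ℝ := 2 * Real.sqrt (κ₁ * (1 - γ) / (κ₂ ^ 2 - κ₁ ^ 2))
    let QF₂ : ℝ → ℝ := fun s => (1 / 2) * κ₂ * s ^ 2 + γ
    let QF₃ : ℝ → ℝ := fun s =>
      -(1 / 2) * κ₁ * s ^ 2 + 2 * s * Real.sqrt (κ₁ * (κ₁ + κ₂) * (1 - γ) / (κ₂ - κ₁))
        + (γ * (κ₁ + κ₂) - 2 * κ₁) / (κ₂ - κ₁)
    QF₂ ρ₂ = QF₃ ρ₂ ∧ deriv QF₂ ρ₂ = deriv QF₃ ρ₂ := by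
  intro ρ₂ QF₂ QF₃
  set a := √(κ₁ * (1 - γ) / (κ₂ ^ 2 - κ₁ ^ 2))
  have hρ : ρ₂ = 2 * a := rfl
  have hsq : κ₂ ^ 2 - κ₁ ^ 2 ≠ 0 := by nlinarith
  have ha : a ^ 2 * (κ₂ ^ 2 - κ₁ ^ 2) = κ₁ * (1 - γ) := by
    rw [Real.sq_sqrt (div_nonneg (mul_nonneg hκ₁.le (by linarith)) (by nlinarith)),
      div_mul_cancel₀ _ hsq]
  have hb : √(κ₁ * (κ₁ + κ₂) * (1 - γ) / (κ₂ - κ₁)) = (κ₁ + κ₂) * a :=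
    sqrt_mul_add_mul_div_sub _ _ _ _ (by linarith)
  have hQF₂ : deriv QF₂ ρ₂ = κ₂ * ρ₂ := by
    rw [show QF₂ = fun s => 1 / 2 * κ₂ * s ^ 2 + 0 * s + γ by ext; simp only [QF₂]; ring,
      (hasDerivAt_quadratic _ _ _ _).deriv]
    ring
  have hQF₃ : deriv QF₃ ρ₂ = -κ₁ * ρ₂ + 2 * ((κ₁ + κ₂) * a) := by
    rw [show QF₃ = fun s => -(1 / 2) * κ₁ * s ^ 2 + 2 * ((κ₁ + κ₂) * a) * s
        + (γ * (κ₁ + κ₂) - 2 * κ₁) / (κ₂ - κ₁) by ext; simp only [QF₃, hb]; ring,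
      (hasDerivAt_quadratic _ _ _ _).deriv]
    ring
  refine ⟨?_, by rw [hQF₂, hQF₃, hρ]; ring⟩
  simp only [QF₂, QF₃, hρ, hb]
  field_simp [sub_ne_zero.2 hκ.ne']
  linear_combination (-2 : ℝ) * ha

/-- For `0 < κ₁ < κ₂`, `0 < γ < 1` and `ρ₂ = 2√(κ₁(1−γ)/(κ₂²−κ₁²))`,
the branches `QF₂` and `QF₃` of the quasiconvex envelope agree together with their
derivatives at `s = ρ₂`. -/
theorem stmt_4 (κ₁ κ₂ γ : ℝ) (hκ₁ : 0 < κ₁) (hκ : κ₁ < κ₂) (hγ0 : 0 < γ) (hγ1 : γ < 1) :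
    let ρ₂ : ℝ := 2 * Real.sqrt (κ₁ * (1 - γ) / (κ₂ ^ 2 - κ₁ ^ 2))
    let QF₂ : ℝ → ℝ := fun s => (1 / 2) * κ₂ * s ^ 2 + γ
    let QF₃ : ℝ → ℝ := fun s =>
      -(1 / 2) * κ₁ * s ^ 2 + 2 * s * Real.sqrt (κ₁ * (κ₁ + κ₂) * (1 - γ) / (κ₂ - κ₁))
        + (γ * (κ₁ + κ₂) - 2 * κ₁) / (κ₂ - κ₁)
    QF₂ ρ₂ = QF₃ ρ₂ ∧ deriv QF₂ ρ₂ = deriv QF₃ ρ₂ :=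
  stmt_4_general κ₁ κ₂ γ hκ₁ hκ hγ1
end

section
/- Let 0 < κ₁ < κ₂ and 0 < γ < 1. Then for every s ≥ 0, QF₃(s) = −½κ₁s² + 2s·√(κ₁(κ₁+κ₂)(1−γ)/(κ₂−κ₁)) + (γ(κ₁+κ₂) − 2κ₁)/(κ₂−κ₁) ≤ ½κ₂s² + γ, and equality holds if and only if s = ρ₂ = 2√(κ₁(1−γ)/(κ₂²−κ₁²)). Equivalently, ½κ₂s² + γ − QF₃(s) = (√((κ₁+κ₂)/2)·s − √(2κ₁(1−γ)/(κ₂−κ₁)))². -/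
/-- For `0 < κ₁ < κ₂`, `0 < γ < 1` and every `s ≥ 0`,
`QF₃(s) ≤ ½κ₂s² + γ`, with equality iff `s = ρ₂ = 2√(κ₁(1−γ)/(κ₂²−κ₁²))`;
equivalently `½κ₂s² + γ − QF₃(s) = (√((κ₁+κ₂)/2)·s − √(2κ₁(1−γ)/(κ₂−κ₁)))²`. -/
theorem stmt_7 (κ₁ κ₂ γ : ℝ) (hκ₁ : 0 < κ₁) (hκ : κ₁ < κ₂) (hγ0 : 0 < γ) (hγ1 : γ < 1) :
    let QF₃ : ℝ → ℝ := fun s =>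
      -(1 / 2) * κ₁ * s ^ 2 + 2 * s * Real.sqrt (κ₁ * (κ₁ + κ₂) * (1 - γ) / (κ₂ - κ₁))
        + (γ * (κ₁ + κ₂) - 2 * κ₁) / (κ₂ - κ₁)
    ∀ s : ℝ, 0 ≤ s →
      QF₃ s ≤ (1 / 2) * κ₂ * s ^ 2 + γ ∧
      (QF₃ s = (1 / 2) * κ₂ * s ^ 2 + γ ↔
        s = 2 * Real.sqrt (κ₁ * (1 - γ) / (κ₂ ^ 2 - κ₁ ^ 2))) ∧
      (1 / 2) * κ₂ * s ^ 2 + γ - QF₃ s =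
        (Real.sqrt ((κ₁ + κ₂) / 2) * s - Real.sqrt (2 * κ₁ * (1 - γ) / (κ₂ - κ₁))) ^ 2 := by
  intro QF₃ s hs
  have hd : (0:ℝ) < κ₂ - κ₁ := by linarith
  have hγ' : (0:ℝ) < 1 - γ := by linarith
  have ha : (0:ℝ) ≤ (κ₁ + κ₂) / 2 := by linarith
  have hb : (0:ℝ) ≤ 2 * κ₁ * (1 - γ) / (κ₂ - κ₁) := by positivity
  set A := Real.sqrt ((κ₁ + κ₂) / 2) with hAdef
  set B := Real.sqrt (2 * κ₁ * (1 - γ) / (κ₂ - κ₁)) with hBdef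
  have hA2 : A ^ 2 = (κ₁ + κ₂) / 2 := Real.sq_sqrt ha
  have hB2 : B ^ 2 = 2 * κ₁ * (1 - γ) / (κ₂ - κ₁) := Real.sq_sqrt hb
  have hAB : Real.sqrt (κ₁ * (κ₁ + κ₂) * (1 - γ) / (κ₂ - κ₁)) = A * B := by
    rw [hAdef, hBdef, ← Real.sqrt_mul ha]
    congr 1
    field_simp
  have hApos : 0 < A := Real.sqrt_pos.mpr (by linarith)
  -- the key algebraic identity
  have key : (1 / 2) * κ₂ * s ^ 2 + γ - QF₃ s = (A * s - B) ^ 2 := by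
    simp only [QF₃, hAB]
    have expand : (A * s - B) ^ 2 = A ^ 2 * s ^ 2 - 2 * (A * B) * s + B ^ 2 := by ring
    rw [expand, hA2, hB2]
    field_simp
    ring
  -- ρ₂ satisfies A * ρ₂ = B
  have hρ : A * (2 * Real.sqrt (κ₁ * (1 - γ) / (κ₂ ^ 2 - κ₁ ^ 2))) = B := by
    have hx : (0:ℝ) ≤ κ₁ * (1 - γ) / (κ₂ ^ 2 - κ₁ ^ 2) := by
      have : (0:ℝ) < κ₂ ^ 2 - κ₁ ^ 2 := by nlinarith
      positivity
    have h2 : A * (2 * Real.sqrt (κ₁ * (1 - γ) / (κ₂ ^ 2 - κ₁ ^ 2)))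
        = Real.sqrt (4 * ((κ₁ + κ₂) / 2 * (κ₁ * (1 - γ) / (κ₂ ^ 2 - κ₁ ^ 2)))) := by
      rw [show (4:ℝ) * ((κ₁ + κ₂) / 2 * (κ₁ * (1 - γ) / (κ₂ ^ 2 - κ₁ ^ 2)))
          = 2 ^ 2 * ((κ₁ + κ₂) / 2 * (κ₁ * (1 - γ) / (κ₂ ^ 2 - κ₁ ^ 2))) by ring,
        Real.sqrt_mul (by positivity), Real.sqrt_sq (by norm_num : (0:ℝ) ≤ 2),
        Real.sqrt_mul ha]
      ring
    rw [h2, hBdef]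
    congr 1
    have h3 : κ₂ ^ 2 - κ₁ ^ 2 = (κ₂ - κ₁) * (κ₂ + κ₁) := by ring
    have hne1 : κ₂ - κ₁ ≠ 0 := ne_of_gt hd
    have hne2 : κ₂ + κ₁ ≠ 0 := by linarith
    rw [h3]
    field_simp
    ring
  have hAne : A ≠ 0 := ne_of_gt hApos
  refine ⟨by nlinarith [sq_nonneg (A * s - B)], ?_, key⟩
  constructor
  · intro h
    have h0 : (A * s - B) ^ 2 = 0 := by rw [← key]; linarith
    have h1 : A * s = B := by
      have := pow_eq_zero_iff (n := 2) (by norm_num) |>.mp h0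
      linarith
    have := h1.trans hρ.symm
    exact mul_left_cancel₀ hAne this
  · intro h
    have h1 : A * s = B := by rw [h]; exact hρ
    have : (A * s - B) ^ 2 = 0 := by rw [h1]; ring
    linarith [key, this]
end

section
/- Let 0 < κ₁ < κ₂ and 0 < γ < 1, and set ρ₁ = γ/√κ₁ and ρ₂ = 2√(κ₁(1−γ)/(κ₂²−κ₁²)). Then ρ₁ < ρ₂ if and only if γ < 2κ₁/(κ₁+κ₂), and ρ₁ = ρ₂ if and only if γ = 2κ₁/(κ₁+κ₂). -/
/-- For `0 < κ₁ < κ₂` and `0 < γ < 1`, with `ρ₁ = γ/√κ₁` and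
`ρ₂ = 2√(κ₁(1−γ)/(κ₂²−κ₁²))`: `ρ₁ < ρ₂ ↔ γ < 2κ₁/(κ₁+κ₂)` and
`ρ₁ = ρ₂ ↔ γ = 2κ₁/(κ₁+κ₂)`. -/
theorem stmt_11 (κ₁ κ₂ γ : ℝ) (hκ₁ : 0 < κ₁) (hκ : κ₁ < κ₂) (hγ0 : 0 < γ) (hγ1 : γ < 1) :
    let ρ₁ : ℝ := γ / Real.sqrt κ₁
    let ρ₂ : ℝ := 2 * Real.sqrt (κ₁ * (1 - γ) / (κ₂ ^ 2 - κ₁ ^ 2))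
    (ρ₁ < ρ₂ ↔ γ < 2 * κ₁ / (κ₁ + κ₂)) ∧ (ρ₁ = ρ₂ ↔ γ = 2 * κ₁ / (κ₁ + κ₂)) := by
  intro ρ₁ ρ₂
  have hκ2 : 0 < κ₂ := hκ₁.trans hκ
  have hD : 0 < κ₂ ^ 2 - κ₁ ^ 2 := by nlinarith
  have h1γ : 0 < 1 - γ := by linarith
  have hsum : 0 < κ₁ + κ₂ := by linarith
  have pos2 : 0 < (κ₂ - κ₁) * γ + 2 * κ₁ := by nlinarith
  have e1 : ρ₁ = Real.sqrt (γ ^ 2 / κ₁) := by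
    show γ / Real.sqrt κ₁ = _
    rw [Real.sqrt_div (by positivity) κ₁, Real.sqrt_sq hγ0.le]
  have e2 : ρ₂ = Real.sqrt (4 * (κ₁ * (1 - γ) / (κ₂ ^ 2 - κ₁ ^ 2))) := by
    show 2 * Real.sqrt _ = _
    rw [show (4:ℝ) = 2 ^ 2 by norm_num, Real.sqrt_mul (by norm_num) _,
      Real.sqrt_sq (by norm_num : (0:ℝ) ≤ 2)]
  have hA : (0:ℝ) ≤ γ ^ 2 / κ₁ := by positivity
  have hB : (0:ℝ) ≤ 4 * (κ₁ * (1 - γ) / (κ₂ ^ 2 - κ₁ ^ 2)) := by positivity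
  -- polynomial iff
  have keylt : γ ^ 2 / κ₁ < 4 * (κ₁ * (1 - γ) / (κ₂ ^ 2 - κ₁ ^ 2)) ↔
      γ * (κ₁ + κ₂) < 2 * κ₁ := by
    rw [show 4 * (κ₁ * (1 - γ) / (κ₂ ^ 2 - κ₁ ^ 2)) = 4 * (κ₁ * (1 - γ)) / (κ₂ ^ 2 - κ₁ ^ 2) by ring,
      div_lt_div_iff₀ hκ₁ hD]
    constructor
    · intro h
      by_contra hc
      push_neg at hc
      have : 0 ≤ (γ * (κ₁ + κ₂) - 2 * κ₁) * ((κ₂ - κ₁) * γ + 2 * κ₁) :=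
        mul_nonneg (by linarith) pos2.le
      nlinarith
    · intro h
      have : (γ * (κ₁ + κ₂) - 2 * κ₁) * ((κ₂ - κ₁) * γ + 2 * κ₁) < 0 :=
        mul_neg_of_neg_of_pos (by linarith) pos2
      nlinarith
  have keyeq : γ ^ 2 / κ₁ = 4 * (κ₁ * (1 - γ) / (κ₂ ^ 2 - κ₁ ^ 2)) ↔
      γ * (κ₁ + κ₂) = 2 * κ₁ := by
    rw [show 4 * (κ₁ * (1 - γ) / (κ₂ ^ 2 - κ₁ ^ 2)) = 4 * (κ₁ * (1 - γ)) / (κ₂ ^ 2 - κ₁ ^ 2) by ring,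
      div_eq_div_iff hκ₁.ne' hD.ne']
    constructor
    · intro h
      have h' : (γ * (κ₁ + κ₂) - 2 * κ₁) * ((κ₂ - κ₁) * γ + 2 * κ₁) = 0 := by
        nlinarith [h]
      rcases mul_eq_zero.mp h' with h0 | h0
      · linarith
      · linarith
    · intro h
      nlinarith [h]
  constructor
  · rw [e1, e2, Real.sqrt_lt_sqrt_iff hA, keylt, lt_div_iff₀ hsum, mul_comm]
  · rw [e1, e2, Real.sqrt_inj hA hB, keyeq, eq_div_iff hsum.ne', mul_comm]
end

section
/- Let A and B be real symmetric 2×2 matrices with det(A − B) ≤ 0. Then the closed intervals spanned by their eigenvalues overlap: λ_min(A) ≤ λ_max(B) and λ_min(B) ≤ λ_max(A). In particular, if Rank(A − B) = 1 (so det(A−B) = 0), the eigenvalue intervals of A and B intersect. -/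
/-!
If every eigenvalue of `A` were at least `a` and every eigenvalue of `B` at most `b < a`, then in the
Loewner order `A ≥ a • 1` and `B ≤ b • 1`, so `A - B ≥ (a - b) • 1` would be positive definite and
have positive determinant.
-/

open Matrix
open scoped MatrixOrder ComplexOrder

namespace Matrix.IsHermitian

variable {𝕜 n : Type*} [RCLike 𝕜] [Fintype n] [DecidableEq n] {A : Matrix n n 𝕜}

theorem algebraMap_le_iff_le_eigenvalues (hA : A.IsHermitian) {r : ℝ} :
    algebraMap ℝ (Matrix n n 𝕜) r ≤ A ↔ ∀ i, r ≤ hA.eigenvalues i := by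
  rw [algebraMap_le_iff_le_spectrum hA.isSelfAdjoint, hA.spectrum_real_eq_range_eigenvalues,
    Set.forall_mem_range]

theorem le_algebraMap_iff_eigenvalues_le (hA : A.IsHermitian) {r : ℝ} :
    A ≤ algebraMap ℝ (Matrix n n 𝕜) r ↔ ∀ i, hA.eigenvalues i ≤ r := by
  rw [le_algebraMap_iff_spectrum_le hA.isSelfAdjoint, hA.spectrum_real_eq_range_eigenvalues,
    Set.forall_mem_range]

theorem posDef_sub_of_eigenvalues_separated {B : Matrix n n 𝕜} (hA : A.IsHermitian)
    (hB : B.IsHermitian) {a b : ℝ} (hab : b < a) (ha : ∀ i, a ≤ hA.eigenvalues i)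
    (hb : ∀ i, hB.eigenvalues i ≤ b) : (A - B).PosDef := by
  have hgap : (algebraMap ℝ (Matrix n n 𝕜) (a - b)).PosDef := by
    rw [Algebra.algebraMap_eq_smul_one]
    exact PosDef.one.smul (sub_pos.2 hab)
  have hrest : (A - B - algebraMap ℝ (Matrix n n 𝕜) (a - b)).PosSemidef := by
    have h1 := hA.algebraMap_le_iff_le_eigenvalues.2 ha
    have h2 := hB.le_algebraMap_iff_eigenvalues_le.2 hb
    rw [map_sub, ← Matrix.nonneg_iff_posSemidef]
    convert add_nonneg (sub_nonneg.2 h1) (sub_nonneg.2 h2) using 1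
    abel
  simpa using hgap.add_posSemidef hrest

end Matrix.IsHermitian

theorem min_eigenvalues_le_max_eigenvalues_of_det_sub_nonpos {A B : Matrix (Fin 2) (Fin 2) ℝ}
    (hA : A.IsHermitian) (hB : B.IsHermitian) (hdet : (A - B).det ≤ 0) :
    min (hA.eigenvalues 0) (hA.eigenvalues 1) ≤ max (hB.eigenvalues 0) (hB.eigenvalues 1) := by
  by_contra! hlt
  refine hdet.not_gt (hA.posDef_sub_of_eigenvalues_separated hB hlt ?_ ?_).det_pos
  · exact Fin.forall_fin_two.2 ⟨min_le_left _ _, min_le_right _ _⟩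
  · exact Fin.forall_fin_two.2 ⟨le_max_left _ _, le_max_right _ _⟩

/-- If `A`, `B` are real symmetric 2×2 matrices with
`det(A − B) ≤ 0`, then the closed intervals spanned by their eigenvalues overlap:
`λ_min(A) ≤ λ_max(B)` and `λ_min(B) ≤ λ_max(A)`. -/
theorem stmt_16 (A B : Matrix (Fin 2) (Fin 2) ℝ)
    (hA : A.IsHermitian) (hB : B.IsHermitian) (hdet : (A - B).det ≤ 0) :
    min (hA.eigenvalues 0) (hA.eigenvalues 1) ≤ max (hB.eigenvalues 0) (hB.eigenvalues 1) ∧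
    min (hB.eigenvalues 0) (hB.eigenvalues 1) ≤ max (hA.eigenvalues 0) (hA.eigenvalues 1) := by
  have hdet' : (B - A).det ≤ 0 := by
    rwa [← neg_sub, det_neg, Fintype.card_fin, neg_one_sq, one_mul]
  exact ⟨min_eigenvalues_le_max_eigenvalues_of_det_sub_nonpos hA hB hdet,
    min_eigenvalues_le_max_eigenvalues_of_det_sub_nonpos hB hA hdet'⟩
end

section
/- Let σ : ℝ² → M₂(ℝ) be a continuously differentiable matrix field that is ℤ²-periodic, takes symmetric values (σ₁₂ = σ₂₁), and is divergence-free in each row: ∂₁σ_{i1} + ∂₂σ_{i2} = 0 for i = 1,2. Then ∫_{[0,1]²} det σ(x) dx = det(∫_{[0,1]²} σ(x) dx), i.e. the average of det σ over the unit periodicity cell equals the determinant of the average stress. -/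
/-!
Write `σ = (a b; c d)`, so that `(a, b)` and `(c, d)` are divergence-free. By the divergence
theorem such a field has zero flux through the boundary of every rectangle. With periodicity this
makes `∫₀¹ a(x, ·)` and `∫₀¹ c(x, ·)` independent of `x`, and `∫₀¹ b(·, y)` and `∫₀¹ d(·, y)`
independent of `y`, so all four equal cell averages. It also shows that
`ψ(x, y) = ∫₀^y a(x, t) dt` has `∂₂ψ = a` and `∂₁ψ = b(x, 0) - b(x, y)`, so `ψ` is `C¹` and
`div (ψ c, ψ d) = a d - b c + b(x, 0) c`. The divergence theorem on the unit cell turns the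
average of this into `∫₀¹ ψ(x, 1) d(x, 1) dx = ⟨a⟩⟨d⟩`, while `⟨b(·, 0) c⟩ = ⟨b⟩⟨c⟩`.
-/

open MeasureTheory Set intervalIntegral ContinuousLinearMap

namespace StressField

variable {a b c d f : ℝ × ℝ → ℝ}

theorem deriv_comp_mk_fst (hf : Differentiable ℝ f) (x y : ℝ) :
    deriv (fun t => f (t, y)) x = fderiv ℝ f (x, y) (1, 0) :=
  ((hf (x, y)).hasFDerivAt.comp_hasDerivAt x
    ((hasDerivAt_id x).prodMk (hasDerivAt_const x y))).deriv

theorem deriv_comp_mk_snd (hf : Differentiable ℝ f) (x y : ℝ) :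
    deriv (fun t => f (x, t)) y = fderiv ℝ f (x, y) (0, 1) :=
  ((hf (x, y)).hasFDerivAt.comp_hasDerivAt y
    ((hasDerivAt_const y x).prodMk (hasDerivAt_id y))).deriv

theorem setIntegral_Icc_prod_Icc (hf : Continuous f) {a₁ b₁ a₂ b₂ : ℝ} (h₁ : a₁ ≤ b₁)
    (h₂ : a₂ ≤ b₂) :
    ∫ p in Icc a₁ b₁ ×ˢ Icc a₂ b₂, f p = ∫ x in a₁..b₁, ∫ y in a₂..b₂, f (x, y) := by
  rw [Measure.volume_eq_prod, setIntegral_prod _ (by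
    rw [← Measure.volume_eq_prod]
    exact hf.continuousOn.integrableOn_compact (isCompact_Icc.prod isCompact_Icc))]
  simp only [integral_Icc_eq_integral_Ioc, integral_of_le h₁, integral_of_le h₂]

theorem setIntegral_Icc_prod_Icc_swap (hf : Continuous f) {a₁ b₁ a₂ b₂ : ℝ} (h₁ : a₁ ≤ b₁)
    (h₂ : a₂ ≤ b₂) :
    ∫ p in Icc a₁ b₁ ×ˢ Icc a₂ b₂, f p = ∫ y in a₂..b₂, ∫ x in a₁..b₁, f (x, y) := by
  have h := setIntegral_Icc_prod_Icc (hf.comp continuous_swap) h₂ h₁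
  rw [Measure.volume_eq_prod, Function.comp_def, setIntegral_prod_swap] at h
  rw [Measure.volume_eq_prod]
  exact h

theorem flux_rectangle_eq_zero (ha : ContDiff ℝ 1 a) (hb : ContDiff ℝ 1 b)
    (hab : ∀ p, fderiv ℝ a p (1, 0) + fderiv ℝ b p (0, 1) = 0) (x₀ x₁ y₀ y₁ : ℝ) :
    (∫ x in x₀..x₁, b (x, y₁)) - (∫ x in x₀..x₁, b (x, y₀)) + (∫ y in y₀..y₁, a (x₁, y)) -
      ∫ y in y₀..y₁, a (x₀, y) = 0 := by
  rw [← integral2_divergence_prod_of_hasFDerivAt a b (fderiv ℝ a) (fderiv ℝ b) x₀ y₀ x₁ y₁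
    ha.continuous.continuousOn hb.continuous.continuousOn
    (fun p _ => (ha.differentiable one_ne_zero p).hasFDerivAt)
    (fun p _ => (hb.differentiable one_ne_zero p).hasFDerivAt)
    (by simp only [hab]; exact integrableOn_zero)]
  simp [hab]

theorem integral_vertical_eq_setIntegral (ha : ContDiff ℝ 1 a) (hb : ContDiff ℝ 1 b)
    (hab : ∀ p, fderiv ℝ a p (1, 0) + fderiv ℝ b p (0, 1) = 0) (hb1 : ∀ x, b (x, 1) = b (x, 0))
    (x : ℝ) : ∫ y in (0 : ℝ)..1, a (x, y) = ∫ p in Icc (0 : ℝ) 1 ×ˢ Icc (0 : ℝ) 1, a p := by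
  have hconst : ∀ x', ∫ y in (0 : ℝ)..1, a (x', y) = ∫ y in (0 : ℝ)..1, a (x, y) := fun x' => by
    have h := flux_rectangle_eq_zero ha hb hab x x' 0 1
    simp only [hb1, sub_self, zero_add] at h
    linarith
  rw [setIntegral_Icc_prod_Icc ha.continuous zero_le_one zero_le_one,
    integral_congr fun x' _ => hconst x']
  simp

theorem integral_horizontal_eq_setIntegral (ha : ContDiff ℝ 1 a) (hb : ContDiff ℝ 1 b)
    (hab : ∀ p, fderiv ℝ a p (1, 0) + fderiv ℝ b p (0, 1) = 0) (ha1 : ∀ y, a (1, y) = a (0, y))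
    (y : ℝ) : ∫ x in (0 : ℝ)..1, b (x, y) = ∫ p in Icc (0 : ℝ) 1 ×ˢ Icc (0 : ℝ) 1, b p := by
  have hconst : ∀ y', ∫ x in (0 : ℝ)..1, b (x, y') = ∫ x in (0 : ℝ)..1, b (x, y) := fun y' => by
    have h := flux_rectangle_eq_zero ha hb hab 0 1 y y'
    simp only [ha1] at h
    linarith
  rw [setIntegral_Icc_prod_Icc_swap hb.continuous zero_le_one zero_le_one,
    integral_congr fun y' _ => hconst y']
  simp

noncomputable def primitiveSnd (a : ℝ × ℝ → ℝ) (p : ℝ × ℝ) : ℝ := ∫ t in (0 : ℝ)..p.2, a (p.1, t)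

theorem primitiveSnd_eq_add_integral (ha : ContDiff ℝ 1 a) (hb : ContDiff ℝ 1 b)
    (hab : ∀ p, fderiv ℝ a p (1, 0) + fderiv ℝ b p (0, 1) = 0) (x y : ℝ) :
    primitiveSnd a (x, y) = primitiveSnd a (0, y) + ∫ s in (0 : ℝ)..x, (b (s, 0) - b (s, y)) := by
  have h := flux_rectangle_eq_zero ha hb hab 0 x 0 y
  have hb' : Continuous b := hb.continuous
  rw [intervalIntegral.integral_sub
    ((by fun_prop : Continuous fun s => b (s, 0)).intervalIntegrable _ _)
    ((by fun_prop : Continuous fun s => b (s, y)).intervalIntegrable _ _)]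
  unfold primitiveSnd
  linarith

theorem hasDerivAt_primitiveSnd_fst (ha : ContDiff ℝ 1 a) (hb : ContDiff ℝ 1 b)
    (hab : ∀ p, fderiv ℝ a p (1, 0) + fderiv ℝ b p (0, 1) = 0) (x y : ℝ) :
    HasDerivAt (fun x => primitiveSnd a (x, y)) (b (x, 0) - b (x, y)) x := by
  have hb' : Continuous b := hb.continuous
  rw [funext fun x => primitiveSnd_eq_add_integral ha hb hab x y]
  exact ((by fun_prop : Continuous fun s => b (s, 0) - b (s, y)).integral_hasStrictDerivAt 0 x
    ).hasDerivAt.const_add _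

theorem hasDerivAt_primitiveSnd_snd (ha : Continuous a) (x y : ℝ) :
    HasDerivAt (fun y => primitiveSnd a (x, y)) (a (x, y)) y :=
  ((by fun_prop : Continuous fun t => a (x, t)).integral_hasStrictDerivAt 0 y).hasDerivAt

theorem hasFDerivAt_primitiveSnd (ha : ContDiff ℝ 1 a) (hb : ContDiff ℝ 1 b)
    (hab : ∀ p, fderiv ℝ a p (1, 0) + fderiv ℝ b p (0, 1) = 0) (p : ℝ × ℝ) :
    HasFDerivAt (primitiveSnd a)
      ((toSpanSingleton ℝ (b (p.1, 0) - b p)).coprod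
        (toSpanSingleton ℝ (a p))) p := by
  have hb' : Continuous b := hb.continuous
  have ha' : Continuous a := ha.continuous
  refine (hasStrictFDerivAt_uncurry_coprod (f := fun x y => primitiveSnd a (x, y))
    (f₁ := fun x y => toSpanSingleton ℝ (b (x, 0) - b (x, y)))
    (f₂ := fun x y => toSpanSingleton ℝ (a (x, y)))
    (.of_forall fun q => (hasDerivAt_primitiveSnd_fst ha hb hab q.1 q.2).hasFDerivAt)
    (.of_forall fun q => (hasDerivAt_primitiveSnd_snd ha' q.1 q.2).hasFDerivAt)
    ?_ ?_).hasFDerivAt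
  · exact (toSpanSingletonCLE.continuous.comp (by fun_prop)).continuousAt
  · exact (toSpanSingletonCLE.continuous.comp (by fun_prop)).continuousAt

theorem integral_integral_det_add_eq (ha : ContDiff ℝ 1 a) (hb : ContDiff ℝ 1 b)
    (hc : ContDiff ℝ 1 c) (hd : ContDiff ℝ 1 d)
    (hab : ∀ p, fderiv ℝ a p (1, 0) + fderiv ℝ b p (0, 1) = 0)
    (hcd : ∀ p, fderiv ℝ c p (1, 0) + fderiv ℝ d p (0, 1) = 0)
    (ha1 : ∀ y, a (1, y) = a (0, y)) (hc1 : ∀ y, c (1, y) = c (0, y)) :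
    ∫ x in (0 : ℝ)..1, ∫ y in (0 : ℝ)..1,
        (a (x, y) * d (x, y) - b (x, y) * c (x, y) + b (x, 0) * c (x, y)) =
      ∫ x in (0 : ℝ)..1, primitiveSnd a (x, 1) * d (x, 1) := by
  set ψ' : ℝ × ℝ → ℝ × ℝ →L[ℝ] ℝ := fun p =>
    (toSpanSingleton ℝ (b (p.1, 0) - b p)).coprod (toSpanSingleton ℝ (a p)) with hψ'
  have hψ : ∀ p, HasFDerivAt (primitiveSnd a) (ψ' p) p := hasFDerivAt_primitiveSnd ha hb hab
  have hψc : Continuous (primitiveSnd a) :=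
    continuous_iff_continuousAt.2 fun p => (hψ p).continuousAt
  have hdiv : ∀ p, (primitiveSnd a p • fderiv ℝ c p + c p • ψ' p) (1, 0) +
      (primitiveSnd a p • fderiv ℝ d p + d p • ψ' p) (0, 1) =
        a p * d p - b p * c p + b (p.1, 0) * c p := fun p => by
    have := hcd p
    simp only [hψ', add_apply, smul_apply, coprod_apply, toSpanSingleton_apply, smul_eq_mul]
    linear_combination primitiveSnd a p * this
  have hbc := hb.continuous
  have hcc := hc.continuous
  have hac := ha.continuous
  have hdc := hd.continuous
  have h := integral2_divergence_prod_of_hasFDerivAt (fun p => primitiveSnd a p * c p)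
    (fun p => primitiveSnd a p * d p) _ _ 0 0 1 1 (by fun_prop) (by fun_prop)
    (fun p _ => (hψ p).mul (hc.differentiable one_ne_zero p).hasFDerivAt)
    (fun p _ => (hψ p).mul (hd.differentiable one_ne_zero p).hasFDerivAt) (by
      simp only [hdiv]
      exact (by fun_prop : Continuous fun p : ℝ × ℝ => a p * d p - b p * c p + b (p.1, 0) * c p
        ).continuousOn.integrableOn_compact (isCompact_uIcc.prod isCompact_uIcc))
  simp only [hdiv] at h
  rw [h]
  have hψ0 : ∀ x, primitiveSnd a (x, 0) = 0 := fun x => integral_same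
  have hψ1 : ∀ y, primitiveSnd a (1, y) = primitiveSnd a (0, y) := fun y =>
    integral_congr fun t _ => ha1 t
  simp [hψ0, hψ1, hc1]

theorem setIntegral_det_eq_det_setIntegral (ha : ContDiff ℝ 1 a) (hb : ContDiff ℝ 1 b)
    (hc : ContDiff ℝ 1 c) (hd : ContDiff ℝ 1 d)
    (hab : ∀ p, fderiv ℝ a p (1, 0) + fderiv ℝ b p (0, 1) = 0)
    (hcd : ∀ p, fderiv ℝ c p (1, 0) + fderiv ℝ d p (0, 1) = 0)
    (ha1 : ∀ y, a (1, y) = a (0, y)) (hc1 : ∀ y, c (1, y) = c (0, y))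
    (hb1 : ∀ x, b (x, 1) = b (x, 0)) (hd1 : ∀ x, d (x, 1) = d (x, 0)) :
    ∫ p in Icc (0 : ℝ) 1 ×ˢ Icc (0 : ℝ) 1, (a p * d p - b p * c p) =
      (∫ p in Icc (0 : ℝ) 1 ×ˢ Icc (0 : ℝ) 1, a p) * (∫ p in Icc (0 : ℝ) 1 ×ˢ Icc (0 : ℝ) 1, d p) -
        (∫ p in Icc (0 : ℝ) 1 ×ˢ Icc (0 : ℝ) 1, b p) *
          (∫ p in Icc (0 : ℝ) 1 ×ˢ Icc (0 : ℝ) 1, c p) := by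
  have hbc := hb.continuous
  have hcc := hc.continuous
  have hac := ha.continuous
  have hdc := hd.continuous
  have hint : ∀ f : ℝ × ℝ → ℝ, Continuous f → IntegrableOn f (Icc (0 : ℝ) 1 ×ˢ Icc (0 : ℝ) 1) :=
    fun f hf => hf.continuousOn.integrableOn_compact (isCompact_Icc.prod isCompact_Icc)
  have hsplit : ∫ p in Icc (0 : ℝ) 1 ×ˢ Icc (0 : ℝ) 1, (a p * d p - b p * c p) =
      (∫ p in Icc (0 : ℝ) 1 ×ˢ Icc (0 : ℝ) 1, (a p * d p - b p * c p + b (p.1, 0) * c p)) -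
        ∫ p in Icc (0 : ℝ) 1 ×ˢ Icc (0 : ℝ) 1, b (p.1, 0) * c p := by
    rw [← integral_sub (hint _ (by fun_prop)) (hint _ (by fun_prop))]
    simp
  have hA : ∀ x, primitiveSnd a (x, 1) = ∫ p in Icc (0 : ℝ) 1 ×ˢ Icc (0 : ℝ) 1, a p :=
    integral_vertical_eq_setIntegral ha hb hab hb1
  have hC : ∀ x, ∫ y in (0 : ℝ)..1, c (x, y) = ∫ p in Icc (0 : ℝ) 1 ×ˢ Icc (0 : ℝ) 1, c p :=
    integral_vertical_eq_setIntegral hc hd hcd hd1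
  rw [hsplit, setIntegral_Icc_prod_Icc (by fun_prop) zero_le_one zero_le_one,
    setIntegral_Icc_prod_Icc (by fun_prop) zero_le_one zero_le_one,
    integral_integral_det_add_eq ha hb hc hd hab hcd ha1 hc1]
  simp only [hA, intervalIntegral.integral_const_mul, hC, intervalIntegral.integral_mul_const,
    integral_horizontal_eq_setIntegral hc hd hcd hc1 1,
    integral_horizontal_eq_setIntegral ha hb hab ha1 0]

end StressField

open StressField

theorem stmt_17_general (σ : Fin 2 → Fin 2 → ℝ × ℝ → ℝ)
    (hsmooth : ∀ i j, ContDiff ℝ 1 (σ i j))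
    (hper : ∀ i j, ∀ x : ℝ × ℝ, σ i j (x.1 + 1, x.2) = σ i j x ∧
      σ i j (x.1, x.2 + 1) = σ i j x)
    (hdiv : ∀ i, ∀ x : ℝ × ℝ,
      deriv (fun t => σ i 0 (t, x.2)) x.1 + deriv (fun t => σ i 1 (x.1, t)) x.2 = 0) :
    ∫ x in Set.Icc (0 : ℝ) 1 ×ˢ Set.Icc (0 : ℝ) 1,
        (σ 0 0 x * σ 1 1 x - σ 0 1 x * σ 1 0 x) =
      (∫ x in Set.Icc (0 : ℝ) 1 ×ˢ Set.Icc (0 : ℝ) 1, σ 0 0 x) *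
          (∫ x in Set.Icc (0 : ℝ) 1 ×ˢ Set.Icc (0 : ℝ) 1, σ 1 1 x) -
        (∫ x in Set.Icc (0 : ℝ) 1 ×ˢ Set.Icc (0 : ℝ) 1, σ 0 1 x) *
          (∫ x in Set.Icc (0 : ℝ) 1 ×ˢ Set.Icc (0 : ℝ) 1, σ 1 0 x) := by
  have hdiff : ∀ i j, Differentiable ℝ (σ i j) := fun i j =>
    (hsmooth i j).differentiable one_ne_zero
  have hdiv' : ∀ i p, fderiv ℝ (σ i 0) p (1, 0) + fderiv ℝ (σ i 1) p (0, 1) = 0 :=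
    fun i ⟨x, y⟩ => by
      simpa only [deriv_comp_mk_fst (hdiff i 0), deriv_comp_mk_snd (hdiff i 1)] using hdiv i (x, y)
  have hper₁ : ∀ i j y, σ i j (1, y) = σ i j (0, y) := fun i j y => by
    simpa using (hper i j (0, y)).1
  have hper₂ : ∀ i j x, σ i j (x, 1) = σ i j (x, 0) := fun i j x => by
    simpa using (hper i j (x, 0)).2
  exact setIntegral_det_eq_det_setIntegral (hsmooth 0 0) (hsmooth 0 1) (hsmooth 1 0)
    (hsmooth 1 1) (hdiv' 0) (hdiv' 1) (hper₁ 0 0) (hper₁ 1 0) (hper₂ 0 1) (hper₂ 1 1)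

/-- For a `C¹`, `ℤ²`-periodic, symmetric-valued, row-wise
divergence-free stress field `σ` on `ℝ²` (components `σ i j : ℝ × ℝ → ℝ`),
the average of `det σ` over the unit cell `[0,1]²` equals the determinant of
the average stress (quasiaffinity of the determinant). -/
theorem stmt_17 (σ : Fin 2 → Fin 2 → ℝ × ℝ → ℝ)
    (hsmooth : ∀ i j, ContDiff ℝ 1 (σ i j))
    (hsymm : ∀ x : ℝ × ℝ, σ 0 1 x = σ 1 0 x)
    (hper : ∀ i j, ∀ x : ℝ × ℝ, σ i j (x.1 + 1, x.2) = σ i j x ∧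
      σ i j (x.1, x.2 + 1) = σ i j x)
    (hdiv : ∀ i, ∀ x : ℝ × ℝ,
      deriv (fun t => σ i 0 (t, x.2)) x.1 + deriv (fun t => σ i 1 (x.1, t)) x.2 = 0) :
    ∫ x in Set.Icc (0 : ℝ) 1 ×ˢ Set.Icc (0 : ℝ) 1,
        (σ 0 0 x * σ 1 1 x - σ 0 1 x * σ 1 0 x) =
      (∫ x in Set.Icc (0 : ℝ) 1 ×ˢ Set.Icc (0 : ℝ) 1, σ 0 0 x) *
          (∫ x in Set.Icc (0 : ℝ) 1 ×ˢ Set.Icc (0 : ℝ) 1, σ 1 1 x) -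
        (∫ x in Set.Icc (0 : ℝ) 1 ×ˢ Set.Icc (0 : ℝ) 1, σ 0 1 x) *
          (∫ x in Set.Icc (0 : ℝ) 1 ×ˢ Set.Icc (0 : ℝ) 1, σ 1 0 x) :=
  stmt_17_general σ hsmooth hper hdiv
end
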